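/- arXiv:1510.04222 — 5 statements merged into one kernel-verified Lean document; each statement's English description precedes it below -/
import Mathlib

section
/- Let p ≥ 1, let Ξ be a compact convex subset of ℝ^p (with the Euclidean norm), let y ∈ ℝ^p with y ∉ Ξ, and let δ ≥ 0. Then the closed ball of centre y and radius δ is not contained in the δ-dilation Ξ^{⊕δ} of Ξ; that is, there exists v ∈ ℝ^p with ‖v − y‖ ≤ δ and v ∉ Ξ^{⊕δ}. -/
open Metric Pointwise RealInnerProductSpace

/-!
Separate `y` from `Ξ` by a vector `w`, so that `⟪w, x⟫ < ⟪w, y⟫` on `Ξ`. Adding a vector of norm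
at most `δ` raises `⟪w, ·⟫` by at most `‖w‖ δ`, so `⟪w, ·⟫ < ⟪w, y⟫ + ‖w‖ δ` on `Ξ ⊕ B̄(0, δ)`,
whereas the point `y + (δ / ‖w‖) w` of `B̄(y, δ)` attains that value.
-/

section InnerProductSpace

variable {E : Type*} [NormedAddCommGroup E] [InnerProductSpace ℝ E]

theorem exists_real_inner_lt_of_notMem [CompleteSpace E] {s : Set E} {y : E}
    (hs : Convex ℝ s) (hs' : IsClosed s) (hy : y ∉ s) :
    ∃ w : E, ∀ x ∈ s, ⟪w, x⟫ < ⟪w, y⟫ := by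
  obtain ⟨f, u, hfs, hfy⟩ := geometric_hahn_banach_closed_point hs hs' hy
  refine ⟨(InnerProductSpace.toDual ℝ E).symm f, fun x hx => ?_⟩
  simp only [InnerProductSpace.toDual_symm_apply]
  exact (hfs x hx).trans hfy

theorem norm_div_norm_smul_le (w : E) {δ : ℝ} (hδ : 0 ≤ δ) : ‖(δ / ‖w‖) • w‖ ≤ δ := by
  rcases eq_or_ne w 0 with rfl | hw
  · simpa using hδ
  · rw [norm_smul, Real.norm_of_nonneg (by positivity), div_mul_cancel₀ _ (norm_ne_zero_iff.mpr hw)]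

theorem real_inner_add_div_norm_smul (w y : E) (δ : ℝ) :
    ⟪w, y + (δ / ‖w‖) • w⟫ = ⟪w, y⟫ + ‖w‖ * δ := by
  rcases eq_or_ne w 0 with rfl | hw
  · simp
  · rw [inner_add_right, real_inner_smul_right, real_inner_self_eq_norm_sq]
    field_simp

theorem exists_real_inner_le_of_mem_add_closedBall {s : Set E} (w : E) {v : E} {δ : ℝ}
    (hv : v ∈ s + closedBall 0 δ) : ∃ x ∈ s, ⟪w, v⟫ ≤ ⟪w, x⟫ + ‖w‖ * δ := by
  obtain ⟨x, hx, z, hz, rfl⟩ := hv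
  rw [mem_closedBall_zero_iff] at hz
  refine ⟨x, hx, ?_⟩
  calc ⟪w, x + z⟫ = ⟪w, x⟫ + ⟪w, z⟫ := inner_add_right w x z
    _ ≤ ⟪w, x⟫ + ‖w‖ * ‖z‖ := by gcongr; exact real_inner_le_norm w z
    _ ≤ ⟪w, x⟫ + ‖w‖ * δ := by gcongr

theorem closedBall_not_subset_add_closedBall [CompleteSpace E] {s : Set E} {y : E} {δ : ℝ}
    (hs : Convex ℝ s) (hs' : IsClosed s) (hy : y ∉ s) (hδ : 0 ≤ δ) :
    ¬ closedBall y δ ⊆ s + closedBall 0 δ := by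
  obtain ⟨w, hw⟩ := exists_real_inner_lt_of_notMem hs hs' hy
  intro hsub
  have hmem : y + (δ / ‖w‖) • w ∈ closedBall y δ := by
    rw [mem_closedBall, dist_eq_norm, add_sub_cancel_left]
    exact norm_div_norm_smul_le w hδ
  obtain ⟨x, hx, hle⟩ := exists_real_inner_le_of_mem_add_closedBall w (hsub hmem)
  rw [real_inner_add_div_norm_smul] at hle
  linarith [hw x hx]

end InnerProductSpace

theorem dilation_ball_not_subset_general
    (p : ℕ)
    (Ξ : Set (EuclideanSpace ℝ (Fin p)))
    (hΞc : IsCompact Ξ) (hΞconv : Convex ℝ Ξ)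
    (y : EuclideanSpace ℝ (Fin p)) (hy : y ∉ Ξ)
    (δ : ℝ) (hδ : 0 ≤ δ) :
    ∃ v : EuclideanSpace ℝ (Fin p),
      ‖v - y‖ ≤ δ ∧ v ∉ Ξ + Metric.closedBall (0 : EuclideanSpace ℝ (Fin p)) δ := by
  obtain ⟨v, hv, hv'⟩ :=
    Set.not_subset.mp (closedBall_not_subset_add_closedBall hΞconv hΞc.isClosed hy hδ)
  exact ⟨v, by rwa [mem_closedBall, dist_eq_norm] at hv, hv'⟩

/-- Lemma A.3: for a compact convex set `Ξ ⊆ ℝ^p`, a point `y ∉ Ξ` and `δ ≥ 0`,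
the closed ball `B̄(y,δ)` is not contained in the `δ`-dilation `Ξ ⊕ B̄(0,δ)`. -/
theorem dilation_ball_not_subset
    (p : ℕ) (hp : 1 ≤ p)
    (Ξ : Set (EuclideanSpace ℝ (Fin p)))
    (hΞc : IsCompact Ξ) (hΞconv : Convex ℝ Ξ)
    (y : EuclideanSpace ℝ (Fin p)) (hy : y ∉ Ξ)
    (δ : ℝ) (hδ : 0 ≤ δ) :
    ∃ v : EuclideanSpace ℝ (Fin p),
      ‖v - y‖ ≤ δ ∧ v ∉ Ξ + Metric.closedBall (0 : EuclideanSpace ℝ (Fin p)) δ :=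
  dilation_ball_not_subset_general p Ξ hΞc hΞconv y hy δ hδ
end

section
/- Let p ≥ 1, let Θ be a nonempty compact convex subset of ℝ^p, and let {Θ_n}_{n∈ℕ} be a sequence of nonempty compact convex subsets of ℝ^p whose Hausdorff distance to Θ tends to 0 as n → ∞. Let r ≥ 0 and x ∈ ℝ^p be such that the closed ball B̄(x,r) is contained in the interior of Θ. Then there exists N ∈ ℕ such that for all n ≥ N, B̄(x,r) ⊆ Θ_n. -/
/-!
Pick `ε > 0` with the `ε`-thickening of `B̄(x,r)` inside `Θ`, and `n` with
`d_H(Θ_n, Θ) < ε`. For `y ∈ B̄(x,r)` the ball `B̄(y,ε)` then lies in `Θ`, hence in the open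
`ε`-thickening of `Θ_n`. If `y ∉ Θ_n`, a functional `f` separating `y` from the closed convex
set `Θ_n` gives a point `y + εv` of `B̄(y,ε)`, with `v` a near-maximiser of `f` on the unit
ball, whose `f`-value exceeds `sup f(Θ_n)` by more than `ε‖f‖`, so it is not `ε`-close to
`Θ_n`.
-/

open Metric Filter

theorem ContinuousLinearMap.exists_norm_le_one_lt_apply {E : Type*} [NormedAddCommGroup E]
    [NormedSpace ℝ E] (f : E →L[ℝ] ℝ) {c : ℝ} (hc : c < ‖f‖) :
    ∃ v : E, ‖v‖ ≤ 1 ∧ c < f v := by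
  obtain ⟨v, hv, hfv⟩ := f.exists_lt_apply_of_lt_opNorm hc
  rcases lt_abs.1 hfv with h | h
  exacts [⟨v, hv.le, h⟩, ⟨-v, by simpa using hv.le, by simpa using h⟩]

theorem Convex.mem_of_closedBall_subset_thickening {E : Type*} [NormedAddCommGroup E]
    [NormedSpace ℝ E] {C : Set E} {y : E} {ε : ℝ} (hC : Convex ℝ C) (hCc : IsClosed C)
    (hε : 0 < ε) (h : closedBall y ε ⊆ Metric.thickening ε C) : y ∈ C := by
  by_contra hy
  obtain ⟨f, u, hfC, hfy⟩ := geometric_hahn_banach_closed_point hC hCc hy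
  obtain ⟨v, hv, hfv⟩ := f.exists_norm_le_one_lt_apply
    (show ‖f‖ - (f y - u) / ε < ‖f‖ by have := div_pos (sub_pos.2 hfy) hε; linarith)
  have hz : y + ε • v ∈ closedBall y ε := by
    rw [mem_closedBall, dist_self_add_left, norm_smul, Real.norm_of_nonneg hε.le]
    exact mul_le_of_le_one_right hε.le hv
  obtain ⟨w, hwC, hzw⟩ := mem_thickening_iff.1 (h hz)
  have hgap : ε * ‖f‖ < f (y + ε • v) - f w := by
    rw [map_add, map_smul, smul_eq_mul]
    have hfw := hfC w hwC
    have hεfv : ε * (‖f‖ - (f y - u) / ε) < ε * f v := mul_lt_mul_of_pos_left hfv hε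
    rw [mul_sub, mul_div_cancel₀ _ hε.ne'] at hεfv
    linarith
  have hle : f (y + ε • v) - f w ≤ ε * ‖f‖ := by
    rw [← map_sub, mul_comm]
    calc f (y + ε • v - w) ≤ ‖f (y + ε • v - w)‖ := Real.le_norm_self _
      _ ≤ ‖f‖ * ‖y + ε • v - w‖ := f.le_opNorm _
      _ ≤ ‖f‖ * ε := by gcongr; rw [← dist_eq_norm]; exact hzw.le
  linarith

theorem Metric.subset_thickening_of_hausdorffDist_lt {α : Type*} [PseudoMetricSpace α]
    {s t : Set α} {ε : ℝ} (fin : hausdorffEDist s t ≠ ⊤) (H : hausdorffDist s t < ε) :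
    t ⊆ thickening ε s := fun _ hy =>
  mem_thickening_iff.2 <| (exists_dist_lt_of_hausdorffDist_lt' hy H fin).imp
    fun _ ⟨hx, hd⟩ => ⟨hx, by rwa [dist_comm]⟩

theorem closedBall_subset_of_hausdorff_tendsto_general
    (p : ℕ)
    (Θ : Set (EuclideanSpace ℝ (Fin p)))
    (hne : Θ.Nonempty) (hc : IsCompact Θ)
    (Θn : ℕ → Set (EuclideanSpace ℝ (Fin p)))
    (hnne : ∀ n, (Θn n).Nonempty) (hnc : ∀ n, IsCompact (Θn n))
    (hnconv : ∀ n, Convex ℝ (Θn n))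
    (hHD : Tendsto (fun n => Metric.hausdorffDist (Θn n) Θ) atTop (nhds 0))
    (r : ℝ) (x : EuclideanSpace ℝ (Fin p))
    (hball : Metric.closedBall x r ⊆ interior Θ) :
    ∃ N : ℕ, ∀ n ≥ N, Metric.closedBall x r ⊆ Θn n := by
  obtain ⟨ε, hε, hthick⟩ :=
    (isCompact_closedBall x r).exists_cthickening_subset_open isOpen_interior hball
  refine eventually_atTop.1 <| (hHD.eventually (gt_mem_nhds hε)).mono fun n hn y hy => ?_
  have hfin : hausdorffEDist (Θn n) Θ ≠ ⊤ :=
    hausdorffEDist_ne_top_of_nonempty_of_bounded (hnne n) hne (hnc n).isBounded hc.isBounded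
  refine (hnconv n).mem_of_closedBall_subset_thickening (hnc n).isClosed hε ?_
  calc closedBall y ε ⊆ cthickening ε (closedBall x r) := closedBall_subset_cthickening hy ε
    _ ⊆ Θ := hthick.trans interior_subset
    _ ⊆ thickening ε (Θn n) := subset_thickening_of_hausdorffDist_lt hfin hn

/-- Lemma A.4: if nonempty compact convex sets `Θ_n ⊆ ℝ^p` converge to a nonempty
compact convex set `Θ` in Hausdorff distance, and the closed ball `B̄(x,r)` lies in
the interior of `Θ`, then `B̄(x,r) ⊆ Θ_n` for all large `n`. -/
theorem closedBall_subset_of_hausdorff_tendsto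
    (p : ℕ) (hp : 1 ≤ p)
    (Θ : Set (EuclideanSpace ℝ (Fin p)))
    (hne : Θ.Nonempty) (hc : IsCompact Θ) (hconv : Convex ℝ Θ)
    (Θn : ℕ → Set (EuclideanSpace ℝ (Fin p)))
    (hnne : ∀ n, (Θn n).Nonempty) (hnc : ∀ n, IsCompact (Θn n))
    (hnconv : ∀ n, Convex ℝ (Θn n))
    (hHD : Tendsto (fun n => Metric.hausdorffDist (Θn n) Θ) atTop (nhds 0))
    (r : ℝ) (hr : 0 ≤ r) (x : EuclideanSpace ℝ (Fin p))
    (hball : Metric.closedBall x r ⊆ interior Θ) :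
    ∃ N : ℕ, ∀ n ≥ N, Metric.closedBall x r ⊆ Θn n :=
  closedBall_subset_of_hausdorff_tendsto_general p Θ hne hc Θn hnne hnc hnconv hHD r x hball
end

section
/- Let p ≥ 1, let Θ ⊆ ℝ^p be compact and θ₀ ∈ Θ. Let 0 ≤ r_min < r_max, let w : ℝ → ℝ be Lebesgue-integrable on [r_min, r_max] with w(t) > 0 for every t ∈ [r_min, r_max], and let Φ : [r_min, r_max] × Θ → ℝ be continuous. Assume identifiability: for every θ ∈ Θ with θ ≠ θ₀, the set { t ∈ [r_min,r_max] : Φ(t,θ) ≠ Φ(t,θ₀) } has positive Lebesgue measure. Let A ⊆ [r_min,r_max] be such that [r_min,r_max] ∖ A has Lebesgue measure zero, and let (φ_n)_{n∈ℕ} be bounded measurable functions on [r_min,r_max] with sup_{t ∈ A} |φ_n(t) − Φ(t,θ₀)| → 0 as n → ∞. If (θ_n)_{n∈ℕ} is any sequence in Θ such that for every n and every θ ∈ Θ, U(φ_n, θ_n) ≤ U(φ_n, θ), then θ_n → θ₀. -/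
open MeasureTheory Filter Topology

/-!
The limiting contrast `L θ = ∫ w (Φ(·,θ) - Φ(·,θ₀))²` is continuous on the compact set `Θ`
and, by identifiability, vanishes only at `θ₀`. Since `(a - b)² ≤ 2 (c - a)² + 2 (c - b)²`,
the minimizing property gives `L θₙ ≤ 4 U(φₙ, θ₀)`, and `U(φₙ, θ₀) → 0` by the uniform
convergence of `φₙ` on a set of full measure. Hence every cluster point of `θₙ` in `Θ` is `θ₀`.
-/

section Topology

variable {X Y ι : Type*} [TopologicalSpace X] [TopologicalSpace Y]

theorem MapClusterPt.continuousWithinAt_comp {K : Set X} {x : X} {f : X → Y} {l : Filter ι}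
    {u : ι → X} (hf : ContinuousWithinAt f K x) (hu : MapClusterPt x l u)
    (hmem : ∀ᶠ i in l, u i ∈ K) : MapClusterPt (f x) l (f ∘ u) :=
  hu.tendsto_comp' (hf.tendsto.mono_left (inf_le_inf_left _ (le_principal_iff.2 hmem)))

theorem IsCompact.tendsto_nhds_of_tendsto_comp [T2Space Y] {K : Set X} (hK : IsCompact K)
    {f : X → Y} (hf : ContinuousOn f K) {x₀ : X} (hx₀ : ∀ x ∈ K, f x = f x₀ → x = x₀)
    {l : Filter ι} {u : ι → X} (hmem : ∀ᶠ i in l, u i ∈ K)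
    (hfu : Tendsto (f ∘ u) l (𝓝 (f x₀))) : Tendsto u l (𝓝 x₀) := by
  refine hK.tendsto_nhds_of_unique_mapClusterPt hmem fun x hxK hx => hx₀ x hxK ?_
  exact eq_of_nhds_neBot ((hx.continuousWithinAt_comp (hf x hxK) hmem).clusterPt.mono hfu).neBot

end Topology

section Contrast

variable {α : Type*} [MeasurableSpace α] {μ : Measure α} {w f g h : α → ℝ}

/-- The paper's `U(φ, θ)` is `contrast (volume.restrict (Set.Icc r_min r_max)) w φ (Φ · θ)`. -/
noncomputable def contrast (μ : Measure α) (w f g : α → ℝ) : ℝ :=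
  ∫ t, w t * (f t - g t) ^ 2 ∂μ

theorem contrast_self : contrast μ w f f = 0 := by
  simp [contrast]

theorem contrast_nonneg (hw : 0 ≤ᵐ[μ] w) : 0 ≤ contrast μ w f g :=
  integral_nonneg_of_ae (hw.mono fun _ ht => mul_nonneg ht (sq_nonneg _))

theorem integrable_mul_sq_sub (hw : Integrable w μ) (hf : AEStronglyMeasurable f μ)
    (hg : AEStronglyMeasurable g μ) {C D : ℝ} (hfC : ∀ᵐ t ∂μ, |f t| ≤ C)
    (hgD : ∀ᵐ t ∂μ, |g t| ≤ D) : Integrable (fun t => w t * (f t - g t) ^ 2) μ := by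
  refine hw.mul_bdd ((hf.sub hg).pow 2) (c := (C + D) ^ 2) ?_
  filter_upwards [hfC, hgD] with t hft hgt
  rw [norm_pow, Real.norm_eq_abs]
  exact pow_le_pow_left₀ (abs_nonneg _) ((abs_sub _ _).trans (add_le_add hft hgt)) 2

theorem contrast_le_two_mul_add (hw : 0 ≤ᵐ[μ] w)
    (hf : Integrable (fun t => w t * (h t - f t) ^ 2) μ)
    (hg : Integrable (fun t => w t * (h t - g t) ^ 2) μ) :
    contrast μ w f g ≤ 2 * (contrast μ w h f + contrast μ w h g) := by
  rw [contrast, contrast, contrast, ← integral_add hf hg, ← integral_const_mul]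
  refine integral_mono_of_nonneg (hw.mono fun _ ht => mul_nonneg ht (sq_nonneg _))
    ((hf.add hg).const_mul 2) (hw.mono fun t ht => ?_)
  -- parallelogram law: `(f - g)² + (2h - f - g)² = 2 (h - f)² + 2 (h - g)²`
  have hpar : (f t - g t) ^ 2 ≤ 2 * ((h t - f t) ^ 2 + (h t - g t) ^ 2) := by
    nlinarith [sq_nonneg (2 * h t - f t - g t)]
  nlinarith [mul_le_mul_of_nonneg_left hpar ht]

theorem contrast_le_of_ae_abs_sub_le (hw : 0 ≤ᵐ[μ] w) (hwi : Integrable w μ) {ε : ℝ}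
    (hε : ∀ᵐ t ∂μ, |f t - g t| ≤ ε) : contrast μ w f g ≤ ε ^ 2 * ∫ t, w t ∂μ := by
  rw [← integral_const_mul]
  refine integral_mono_of_nonneg (hw.mono fun _ ht => mul_nonneg ht (sq_nonneg _))
    (hwi.const_mul _) ?_
  filter_upwards [hw, hε] with t hwt hεt
  rw [mul_comm (ε ^ 2)]
  exact mul_le_mul_of_nonneg_left (sq_le_sq' (abs_le.1 hεt).1 (abs_le.1 hεt).2) hwt

theorem tendsto_contrast_of_tendstoUniformlyOn {ι : Type*} {l : Filter ι} {F : ι → α → ℝ}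
    {A : Set α} (hw : 0 ≤ᵐ[μ] w) (hwi : Integrable w μ) (hA : ∀ᵐ t ∂μ, t ∈ A)
    (hF : TendstoUniformlyOn F g l A) : Tendsto (fun i => contrast μ w (F i) g) l (𝓝 0) := by
  refine tendsto_order.2 ⟨fun a ha => Eventually.of_forall fun _ => ha.trans_le
    (contrast_nonneg hw), fun b hb => ?_⟩
  have hsmall : Tendsto (fun ε : ℝ => ε ^ 2 * ∫ t, w t ∂μ) (𝓝[>] 0) (𝓝 0) :=
    ((by fun_prop : Continuous fun ε : ℝ => ε ^ 2 * ∫ t, w t ∂μ).tendsto' 0 0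
      (by simp)).mono_left nhdsWithin_le_nhds
  obtain ⟨ε, hεb, hε⟩ := ((hsmall.eventually (gt_mem_nhds hb)).and self_mem_nhdsWithin).exists
  filter_upwards [Metric.tendstoUniformlyOn_iff.1 hF ε hε] with i hi
  refine (contrast_le_of_ae_abs_sub_le hw hwi (hA.mono fun t ht => ?_)).trans_lt hεb
  rw [abs_sub_comm, ← Real.dist_eq]
  exact (hi t ht).le

theorem contrast_pos (hw : ∀ᵐ t ∂μ, 0 < w t)
    (hi : Integrable (fun t => w t * (f t - g t) ^ 2) μ) (hfg : μ {t | f t ≠ g t} ≠ 0) :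
    0 < contrast μ w f g := by
  refine (integral_pos_iff_support_of_nonneg_ae
    (hw.mono fun _ ht => mul_nonneg ht.le (sq_nonneg _)) hi).2 ?_
  refine (pos_iff_ne_zero.2 hfg).trans_le (measure_mono_ae ?_)
  filter_upwards [hw] with t hwt hne
  exact mul_ne_zero hwt.ne' (pow_ne_zero _ (sub_ne_zero.2 hne))

theorem continuousOn_contrast {X : Type*} [TopologicalSpace X] [FirstCountableTopology X]
    {Θ : Set X} {Φ : α → X → ℝ} (hwi : Integrable w μ)
    (hΦm : ∀ θ ∈ Θ, AEStronglyMeasurable (Φ · θ) μ) (hgm : AEStronglyMeasurable g μ) {M D : ℝ}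
    (hΦM : ∀ θ ∈ Θ, ∀ᵐ t ∂μ, |Φ t θ| ≤ M)
    (hgD : ∀ᵐ t ∂μ, |g t| ≤ D) (hΦc : ∀ᵐ t ∂μ, ContinuousOn (Φ t) Θ) :
    ContinuousOn (fun θ => contrast μ w (Φ · θ) g) Θ := by
  refine continuousOn_of_dominated (bound := fun t => ‖w t‖ * (M + D) ^ 2)
    (fun θ hθ => (integrable_mul_sq_sub hwi (hΦm θ hθ) hgm (hΦM θ hθ) hgD).aestronglyMeasurable)
    (fun θ hθ => ?_) (hwi.norm.mul_const _) ?_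
  · filter_upwards [hΦM θ hθ, hgD] with t hΦt hgt
    rw [norm_mul, norm_pow, Real.norm_eq_abs (Φ t θ - g t)]
    gcongr
    exact (abs_sub _ _).trans (add_le_add hΦt hgt)
  · filter_upwards [hΦc] with t ht
    exact continuousOn_const.mul ((ht.sub continuousOn_const).pow 2)

theorem contrast_le_four_mul_of_le (hw : 0 ≤ᵐ[μ] w)
    (hf : Integrable (fun t => w t * (h t - f t) ^ 2) μ)
    (hg : Integrable (fun t => w t * (h t - g t) ^ 2) μ)
    (hmin : contrast μ w h f ≤ contrast μ w h g) :
    contrast μ w f g ≤ 4 * contrast μ w h g := by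
  linarith [contrast_le_two_mul_add hw hf hg]

theorem tendsto_of_contrast_le {X : Type*} [TopologicalSpace X] [FirstCountableTopology X]
    {Θ : Set X} (hΘ : IsCompact Θ) {θ₀ : X} (hθ₀ : θ₀ ∈ Θ) (hwi : Integrable w μ)
    (hw : ∀ᵐ t ∂μ, 0 < w t) {Φ : α → X → ℝ} (hΦm : ∀ θ ∈ Θ, AEStronglyMeasurable (Φ · θ) μ)
    {M : ℝ} (hΦM : ∀ θ ∈ Θ, ∀ᵐ t ∂μ, |Φ t θ| ≤ M) (hΦc : ∀ᵐ t ∂μ, ContinuousOn (Φ t) Θ)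
    (hident : ∀ θ ∈ Θ, θ ≠ θ₀ → μ {t | Φ t θ ≠ Φ t θ₀} ≠ 0) {A : Set α}
    (hA : ∀ᵐ t ∂μ, t ∈ A) {φ : ℕ → α → ℝ} (hφm : ∀ n, AEStronglyMeasurable (φ n) μ)
    (hφC : ∀ n, ∃ C, ∀ᵐ t ∂μ, |φ n t| ≤ C)
    (hconv : TendstoUniformlyOn φ (Φ · θ₀) atTop A) {θseq : ℕ → X} (hθseq : ∀ n, θseq n ∈ Θ)
    (hmin : ∀ n, contrast μ w (φ n) (Φ · (θseq n)) ≤ contrast μ w (φ n) (Φ · θ₀)) :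
    Tendsto θseq atTop (𝓝 θ₀) := by
  have hw₀ : 0 ≤ᵐ[μ] w := hw.mono fun _ ht => ht.le
  have hφi : ∀ n, ∀ θ ∈ Θ, Integrable (fun t => w t * (φ n t - Φ t θ) ^ 2) μ := fun n θ hθ =>
    have ⟨C, hC⟩ := hφC n
    integrable_mul_sq_sub hwi (hφm n) (hΦm θ hθ) hC (hΦM θ hθ)
  set L := fun θ => contrast μ w (Φ · θ) (Φ · θ₀)
  have hL_unique : ∀ θ ∈ Θ, L θ = L θ₀ → θ = θ₀ := fun θ hθ hL => by
    by_contra hne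
    exact (contrast_pos hw (integrable_mul_sq_sub hwi (hΦm θ hθ) (hΦm θ₀ hθ₀) (hΦM θ hθ)
      (hΦM θ₀ hθ₀)) (hident θ hθ hne)).ne' (hL.trans contrast_self)
  have hL_tendsto : Tendsto (L ∘ θseq) atTop (𝓝 (L θ₀)) := by
    have hU := (tendsto_contrast_of_tendstoUniformlyOn hw₀ hwi hA hconv).const_mul 4
    rw [mul_zero] at hU
    rw [show L θ₀ = 0 from contrast_self]
    exact squeeze_zero (fun n => contrast_nonneg hw₀) (fun n => contrast_le_four_mul_of_le hw₀
      (hφi n _ (hθseq n)) (hφi n θ₀ hθ₀) (hmin n)) hU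
  exact hΘ.tendsto_nhds_of_tendsto_comp
    (continuousOn_contrast hwi hΦm (hΦm θ₀ hθ₀) hΦM (hΦM θ₀ hθ₀) hΦc) hL_unique
    (Eventually.of_forall hθseq) hL_tendsto

end Contrast

theorem minimum_contrast_consistency_deterministic_general
    (p : ℕ)
    (Θ : Set (EuclideanSpace ℝ (Fin p))) (hΘ : IsCompact Θ)
    (θ₀ : EuclideanSpace ℝ (Fin p)) (hθ₀ : θ₀ ∈ Θ)
    (rmin rmax : ℝ)
    (w : ℝ → ℝ) (hw : IntegrableOn w (Set.Icc rmin rmax) volume)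
    (hwpos : ∀ t ∈ Set.Icc rmin rmax, 0 < w t)
    (Φ : ℝ → EuclideanSpace ℝ (Fin p) → ℝ)
    (hΦ : ContinuousOn (fun q : ℝ × EuclideanSpace ℝ (Fin p) => Φ q.1 q.2)
      (Set.Icc rmin rmax ×ˢ Θ))
    (hident : ∀ θ ∈ Θ, θ ≠ θ₀ →
      0 < volume {t ∈ Set.Icc rmin rmax | Φ t θ ≠ Φ t θ₀})
    (A : Set ℝ)
    (hAnull : volume (Set.Icc rmin rmax \ A) = 0)
    (φ : ℕ → ℝ → ℝ) (hφmeas : ∀ n, Measurable (φ n))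
    (hφbdd : ∀ n, ∃ C, ∀ t ∈ Set.Icc rmin rmax, |φ n t| ≤ C)
    (hconv : TendstoUniformlyOn (fun n t => φ n t) (fun t => Φ t θ₀) atTop A)
    (θseq : ℕ → EuclideanSpace ℝ (Fin p)) (hθseqΘ : ∀ n, θseq n ∈ Θ)
    (hmin : ∀ n, ∀ θ ∈ Θ,
      (∫ t in Set.Icc rmin rmax, w t * (φ n t - Φ t (θseq n)) ^ 2) ≤
      (∫ t in Set.Icc rmin rmax, w t * (φ n t - Φ t θ) ^ 2)) :
    Tendsto θseq atTop (nhds θ₀) := by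
  have hS : MeasurableSet (Set.Icc rmin rmax) := measurableSet_Icc
  obtain ⟨M, hM⟩ := (isCompact_Icc.prod hΘ).exists_bound_of_continuousOn hΦ
  refine tendsto_of_contrast_le hΘ hθ₀ hw (ae_restrict_of_forall_mem hS hwpos)
    (fun θ hθ => (hΦ.comp (Continuous.prodMk_left θ).continuousOn
      fun _ ht => ⟨ht, hθ⟩).aestronglyMeasurable hS)
    (fun θ hθ => ae_restrict_of_forall_mem hS fun t ht => hM (t, θ) ⟨ht, hθ⟩)
    (ae_restrict_of_forall_mem hS fun t ht =>
      hΦ.comp (Continuous.prodMk_right t).continuousOn fun _ hθ => ⟨ht, hθ⟩)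
    (fun θ hθ hne => ?_) ((ae_restrict_iff' hS).2 (ae_le_set.2 hAnull))
    (fun n => (hφmeas n).aestronglyMeasurable)
    (fun n => (hφbdd n).imp fun _ => ae_restrict_of_forall_mem hS) hconv hθseqΘ
    (fun n => hmin n θ₀ hθ₀)
  rw [Measure.restrict_apply' hS, Set.inter_comm]
  exact (hident θ hθ hne).ne'

/-- Deterministic core of Theorem A.1 (consistency of minimum contrast estimators):
if `φ_n → Φ(·,θ₀)` uniformly on a full-measure subset `A` of `[r_min,r_max]`, then any
sequence of minimizers `θ_n` of the contrast `θ ↦ ∫ w (φ_n - Φ(·,θ))²` converges to `θ₀`. -/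
theorem minimum_contrast_consistency_deterministic
    (p : ℕ) (hp : 1 ≤ p)
    (Θ : Set (EuclideanSpace ℝ (Fin p))) (hΘ : IsCompact Θ)
    (θ₀ : EuclideanSpace ℝ (Fin p)) (hθ₀ : θ₀ ∈ Θ)
    (rmin rmax : ℝ) (h0 : 0 ≤ rmin) (hlt : rmin < rmax)
    (w : ℝ → ℝ) (hw : IntegrableOn w (Set.Icc rmin rmax) volume)
    (hwpos : ∀ t ∈ Set.Icc rmin rmax, 0 < w t)
    (Φ : ℝ → EuclideanSpace ℝ (Fin p) → ℝ)
    (hΦ : ContinuousOn (fun q : ℝ × EuclideanSpace ℝ (Fin p) => Φ q.1 q.2)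
      (Set.Icc rmin rmax ×ˢ Θ))
    (hident : ∀ θ ∈ Θ, θ ≠ θ₀ →
      0 < volume {t ∈ Set.Icc rmin rmax | Φ t θ ≠ Φ t θ₀})
    (A : Set ℝ) (hA : A ⊆ Set.Icc rmin rmax)
    (hAnull : volume (Set.Icc rmin rmax \ A) = 0)
    (φ : ℕ → ℝ → ℝ) (hφmeas : ∀ n, Measurable (φ n))
    (hφbdd : ∀ n, ∃ C, ∀ t ∈ Set.Icc rmin rmax, |φ n t| ≤ C)
    (hconv : TendstoUniformlyOn (fun n t => φ n t) (fun t => Φ t θ₀) atTop A)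
    (θseq : ℕ → EuclideanSpace ℝ (Fin p)) (hθseqΘ : ∀ n, θseq n ∈ Θ)
    (hmin : ∀ n, ∀ θ ∈ Θ,
      (∫ t in Set.Icc rmin rmax, w t * (φ n t - Φ t (θseq n)) ^ 2) ≤
      (∫ t in Set.Icc rmin rmax, w t * (φ n t - Φ t θ) ^ 2)) :
    Tendsto θseq atTop (nhds θ₀) :=
  minimum_contrast_consistency_deterministic_general p Θ hΘ θ₀ hθ₀ rmin rmax w hw hwpos Φ hΦ hident
    A hAnull φ hφmeas hφbdd hconv θseq hθseqΘ hmin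
end

section
/- Let p ≥ 1, let Θ ⊆ ℝ^p be compact and θ₀ ∈ Θ. Let 0 ≤ r_min < r_max, let w : ℝ → ℝ be Lebesgue-integrable on [r_min, r_max] with w(t) > 0 for every t ∈ [r_min, r_max], and let Φ : [r_min, r_max] × Θ → ℝ be continuous, satisfying identifiability: for every θ ∈ Θ with θ ≠ θ₀, the set { t ∈ [r_min,r_max] : Φ(t,θ) ≠ Φ(t,θ₀) } has positive Lebesgue measure. Let (Ω, 𝒜, P) be a probability space, A ⊆ [r_min,r_max] with Lebesgue-null complement in [r_min,r_max], and for each n let φ_n : Ω × [r_min,r_max] → ℝ be jointly measurable with φ_n(ω,·) bounded for every ω. Assume the random variables S_n(ω) := sup_{t∈A} |φ_n(ω,t) − Φ(t,θ₀)| are measurable and converge to 0 in probability. Let θ̂_n : Ω → ℝ^p be measurable with θ̂_n(ω) ∈ Θ and such that, for P-almost every ω, U(φ_n(ω,·), θ̂_n(ω)) ≤ U(φ_n(ω,·), θ) for all θ ∈ Θ. Then θ̂_n → θ₀ in probability, i.e., for every ε > 0, P( ‖θ̂_n − θ₀‖ > ε ) → 0 as n → ∞. -/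
/-!
Since `θ̂` fits `φ_n` at least as well as `θ₀` does, the pointwise inequality
`(a - b)² ≤ 2 (f - a)² + 2 (f - b)²` gives
`∫ w (Φ(·,θ̂) - Φ(·,θ₀))² ≤ 4 U(φ_n, θ₀) ≤ 4 S_n² ∫ w`.
By identifiability, continuity (dominated convergence) and compactness, the left-hand side is
bounded below by some `m > 0` whenever `‖θ̂ - θ₀‖ ≥ ε`; so that event forces `|S_n| ≥ δ(m) > 0`,
whose probability tends to `0`.
-/

open MeasureTheory Filter Topology
open scoped ENNReal

lemma exists_pos_forall_le_abs_of_le_mul_sq {m c : ℝ} (hm : 0 < m) (hc : 0 ≤ c) :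
    ∃ δ > 0, ∀ s : ℝ, m ≤ c * s ^ 2 → δ ≤ |s| := by
  refine ⟨√(m / (c + 1)), by positivity, fun s hs => ?_⟩
  by_contra! hlt
  have hs2 : s ^ 2 < m / (c + 1) := by
    rw [← sq_abs]
    exact (Real.lt_sqrt (abs_nonneg s)).mp hlt
  rw [lt_div_iff₀ (by linarith)] at hs2
  nlinarith [sq_nonneg s]

lemma ContinuousOn.memLp_top_restrict {α : Type*} [TopologicalSpace α] [MeasurableSpace α]
    [OpensMeasurableSpace α] {μ : Measure α} {I : Set α} {f : α → ℝ} (hf : ContinuousOn f I)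
    (hI : IsCompact I) (hIm : MeasurableSet I) : MemLp f ∞ (μ.restrict I) := by
  obtain ⟨C, hC⟩ := hI.exists_bound_of_continuousOn hf
  exact memLp_top_of_bound (hf.aestronglyMeasurable hIm) C ((ae_restrict_mem hIm).mono hC)

lemma ae_restrict_le_sSup_image {α : Type*} [MeasurableSpace α] {μ : Measure α} {I A : Set α}
    {f : α → ℝ} (hIm : MeasurableSet I) (hA : μ (I \ A) = 0) (hbdd : BddAbove (f '' A)) :
    ∀ᵐ t ∂μ.restrict I, f t ≤ sSup (f '' A) := by
  rw [ae_restrict_iff' hIm]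
  refine measure_mono_null (fun t ht => ?_) hA
  obtain ⟨htI, hlt⟩ := Classical.not_imp.mp ht
  exact ⟨htI, fun htA => hlt (le_csSup hbdd ⟨t, htA, rfl⟩)⟩

lemma MeasureTheory.TendstoInMeasure.tendsto_measure_of_ae_subset {Ω ι : Type*}
    [MeasurableSpace Ω] {P : Measure Ω} {l : Filter ι} {S : ι → Ω → ℝ} {E : ι → Set Ω} {δ : ℝ}
    (hS : TendstoInMeasure P S l fun _ => 0) (hδ : 0 < δ)
    (hE : ∀ i, E i ≤ᵐ[P] {ω | δ ≤ |S i ω|}) :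
    Tendsto (fun i => P (E i)) l (𝓝 0) := by
  refine tendsto_of_tendsto_of_tendsto_of_le_of_le tendsto_const_nhds
    (tendstoInMeasure_iff_norm.mp hS δ hδ) (fun _ => zero_le) fun i => measure_mono_ae ?_
  simpa only [sub_zero, Real.norm_eq_abs] using hE i

namespace MinimumContrast

variable {α : Type*} [MeasurableSpace α] {μ : Measure α} {w f g h : α → ℝ}

/-- The paper's `U(f, θ)` is `contrast (volume.restrict (Icc r_min r_max)) w f (Φ · θ)`. -/
noncomputable def contrast (μ : Measure α) (w f g : α → ℝ) : ℝ :=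
  ∫ t, w t * (f t - g t) ^ 2 ∂μ

lemma integrable_mul_sq_sub (hw : Integrable w μ) (hf : MemLp f ∞ μ) (hg : MemLp g ∞ μ) :
    Integrable (fun t => w t * (f t - g t) ^ 2) μ := by
  simp only [sq]
  exact hw.mul_of_top_left ((hf.sub hg).mul (hf.sub hg))

lemma contrast_le_two_mul_add (hw : Integrable w μ) (hw0 : 0 ≤ᵐ[μ] w) (hf : MemLp f ∞ μ)
    (hg : MemLp g ∞ μ) (hh : MemLp h ∞ μ) :
    contrast μ w g h ≤ 2 * contrast μ w f g + 2 * contrast μ w f h := by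
  have hfg := (integrable_mul_sq_sub hw hf hg).const_mul 2
  have hfh := (integrable_mul_sq_sub hw hf hh).const_mul 2
  rw [contrast, contrast, contrast, ← integral_const_mul, ← integral_const_mul,
    ← integral_add hfg hfh]
  refine integral_mono_ae (integrable_mul_sq_sub hw hg hh) (hfg.add hfh) ?_
  filter_upwards [hw0] with t ht
  -- `2 (f - g)² + 2 (f - h)² - (g - h)² = (2 f - g - h)²`
  nlinarith [mul_nonneg ht (sq_nonneg (2 * f t - g t - h t))]

lemma contrast_le_sq_mul_integral (hw : Integrable w μ) (hw0 : 0 ≤ᵐ[μ] w) (hf : MemLp f ∞ μ)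
    (hg : MemLp g ∞ μ) {s : ℝ} (hs : ∀ᵐ t ∂μ, |f t - g t| ≤ s) :
    contrast μ w f g ≤ s ^ 2 * ∫ t, w t ∂μ := by
  rw [contrast, ← integral_const_mul]
  refine integral_mono_ae (integrable_mul_sq_sub hw hf hg) (hw.const_mul _) ?_
  filter_upwards [hw0, hs] with t hwt hst
  rw [mul_comm]
  exact mul_le_mul_of_nonneg_right (sq_le_sq' (abs_le.mp hst).1 (abs_le.mp hst).2) hwt

lemma contrast_le_of_contrast_le (hw : Integrable w μ) (hw0 : 0 ≤ᵐ[μ] w) (hf : MemLp f ∞ μ)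
    (hg : MemLp g ∞ μ) (hh : MemLp h ∞ μ) (hfit : contrast μ w f g ≤ contrast μ w f h) {s : ℝ}
    (hs : ∀ᵐ t ∂μ, |f t - h t| ≤ s) :
    contrast μ w g h ≤ 4 * (∫ t, w t ∂μ) * s ^ 2 := by
  linarith [contrast_le_two_mul_add hw hw0 hf hg hh, contrast_le_sq_mul_integral hw hw0 hf hh hs]

lemma contrast_pos (hw : Integrable w μ) (hwpos : ∀ᵐ t ∂μ, 0 < w t) (hf : MemLp f ∞ μ)
    (hg : MemLp g ∞ μ) (hfg : 0 < μ {t | f t ≠ g t}) : 0 < contrast μ w f g := by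
  rw [contrast, integral_pos_iff_support_of_nonneg_ae
    (hwpos.mono fun t ht => mul_nonneg ht.le (sq_nonneg _)) (integrable_mul_sq_sub hw hf hg)]
  refine hfg.trans_le (measure_mono_ae ?_)
  filter_upwards [hwpos] with t hwt hne
  exact (mul_pos hwt (pow_two_pos_of_ne_zero (sub_ne_zero.mpr hne))).ne'

lemma continuousOn_contrast {E : Type*} [TopologicalSpace E] [FirstCountableTopology E]
    {Θ : Set E} {Φ : α → E → ℝ} {B : ℝ} {θ₀ : E} (hw : Integrable w μ) (hθ₀ : θ₀ ∈ Θ)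
    (hmeas : ∀ θ ∈ Θ, AEStronglyMeasurable (Φ · θ) μ)
    (hbound : ∀ᵐ t ∂μ, ∀ θ ∈ Θ, |Φ t θ| ≤ B) (hcont : ∀ᵐ t ∂μ, ContinuousOn (Φ t) Θ) :
    ContinuousOn (fun θ => contrast μ w (Φ · θ) (Φ · θ₀)) Θ := by
  refine continuousOn_of_dominated (bound := fun t => |w t| * (2 * B) ^ 2)
    (fun θ hθ => hw.aestronglyMeasurable.mul (((hmeas θ hθ).sub (hmeas θ₀ hθ₀)).pow 2))
    (fun θ hθ => ?_) (hw.abs.mul_const _) ?_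
  · filter_upwards [hbound] with t ht
    rw [norm_mul, Real.norm_eq_abs, Real.norm_eq_abs, abs_sq]
    refine mul_le_mul_of_nonneg_left ?_ (abs_nonneg _)
    nlinarith [abs_le.mp (ht θ hθ), abs_le.mp (ht θ₀ hθ₀)]
  · filter_upwards [hcont] with t ht
    exact continuousOn_const.mul ((ht.sub continuousOn_const).pow 2)

lemma exists_pos_le_contrast_of_le_dist [TopologicalSpace α] [OpensMeasurableSpace α]
    {E : Type*} [MetricSpace E] {I : Set α} {Θ : Set E} {Φ : α → E → ℝ} {θ₀ : E} {ε : ℝ}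
    (hI : IsCompact I) (hIm : MeasurableSet I) (hΘ : IsCompact Θ) (hθ₀ : θ₀ ∈ Θ)
    (hΦ : ContinuousOn (fun q : α × E => Φ q.1 q.2) (I ×ˢ Θ))
    (hw : IntegrableOn w I μ) (hwpos : ∀ t ∈ I, 0 < w t)
    (hident : ∀ θ ∈ Θ, θ ≠ θ₀ → 0 < μ {t ∈ I | Φ t θ ≠ Φ t θ₀}) (hε : 0 < ε) :
    ∃ m > 0, ∀ θ ∈ Θ, ε ≤ dist θ θ₀ → m ≤ contrast (μ.restrict I) w (Φ · θ) (Φ · θ₀) := by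
  have hI_ae : ∀ᵐ t ∂μ.restrict I, t ∈ I := ae_restrict_mem hIm
  have hLp : ∀ θ ∈ Θ, MemLp (Φ · θ) ∞ (μ.restrict I) := fun θ hθ =>
    (hΦ.comp (by fun_prop : Continuous fun t => (t, θ)).continuousOn fun t ht => ⟨ht, hθ⟩)
      |>.memLp_top_restrict hI hIm
  obtain ⟨B, hB⟩ := (hI.prod hΘ).exists_bound_of_continuousOn hΦ
  have hcont := continuousOn_contrast hw hθ₀ (fun θ hθ => (hLp θ hθ).aestronglyMeasurable)
    (hI_ae.mono fun t ht θ hθ => hB (t, θ) ⟨ht, hθ⟩)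
    (hI_ae.mono fun t ht => hΦ.comp (by fun_prop : Continuous fun θ => (t, θ)).continuousOn
      fun θ hθ => ⟨ht, hθ⟩)
  have hpos : ∀ θ ∈ Θ ∩ {θ | ε ≤ dist θ θ₀},
      0 < contrast (μ.restrict I) w (Φ · θ) (Φ · θ₀) := by
    rintro θ ⟨hθ, hθε⟩
    refine contrast_pos hw (hI_ae.mono hwpos) (hLp θ hθ) (hLp θ₀ hθ₀) ?_
    rw [Measure.restrict_apply' hIm, Set.inter_comm]
    exact hident θ hθ (dist_pos.mp (hε.trans_le hθε))
  obtain ⟨m, hm, hmK⟩ := (hΘ.inter_right (isClosed_le continuous_const (by fun_prop)))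
    |>.exists_forall_le' (hcont.mono Set.inter_subset_left) hpos
  exact ⟨m, hm, fun θ hθ hθε => hmK θ ⟨hθ, hθε⟩⟩

end MinimumContrast

open MinimumContrast

theorem minimum_contrast_consistency_in_probability_general
    (p : ℕ)
    (Θ : Set (EuclideanSpace ℝ (Fin p))) (hΘ : IsCompact Θ)
    (θ₀ : EuclideanSpace ℝ (Fin p)) (hθ₀ : θ₀ ∈ Θ)
    (rmin rmax : ℝ)
    (w : ℝ → ℝ) (hw : IntegrableOn w (Set.Icc rmin rmax) volume)
    (hwpos : ∀ t ∈ Set.Icc rmin rmax, 0 < w t)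
    (Φ : ℝ → EuclideanSpace ℝ (Fin p) → ℝ)
    (hΦ : ContinuousOn (fun q : ℝ × EuclideanSpace ℝ (Fin p) => Φ q.1 q.2)
      (Set.Icc rmin rmax ×ˢ Θ))
    (hident : ∀ θ ∈ Θ, θ ≠ θ₀ →
      0 < volume {t ∈ Set.Icc rmin rmax | Φ t θ ≠ Φ t θ₀})
    {Ω : Type*} [MeasurableSpace Ω] (P : Measure Ω) [IsProbabilityMeasure P]
    (A : Set ℝ) (hA : A ⊆ Set.Icc rmin rmax)
    (hAnull : volume (Set.Icc rmin rmax \ A) = 0)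
    (φ : ℕ → Ω → ℝ → ℝ)
    (hφmeas : ∀ n, Measurable (Function.uncurry (φ n)))
    (hφbdd : ∀ n, ∀ ω, ∃ C, ∀ t ∈ Set.Icc rmin rmax, |φ n ω t| ≤ C)
    (S : ℕ → Ω → ℝ)
    (hSdef : ∀ n ω, S n ω = sSup ((fun t => |φ n ω t - Φ t θ₀|) '' A))
    (hSconv : TendstoInMeasure P S atTop (fun _ => (0 : ℝ)))
    (θhat : ℕ → Ω → EuclideanSpace ℝ (Fin p))
    (hθhatΘ : ∀ n ω, θhat n ω ∈ Θ)
    (hmin : ∀ n, ∀ᵐ ω ∂P, ∀ θ ∈ Θ,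
      (∫ t in Set.Icc rmin rmax, w t * (φ n ω t - Φ t (θhat n ω)) ^ 2) ≤
      (∫ t in Set.Icc rmin rmax, w t * (φ n ω t - Φ t θ) ^ 2)) :
    ∀ ε > 0, Tendsto (fun n => P {ω | ε < ‖θhat n ω - θ₀‖}) atTop (nhds 0) := by
  intro ε hε
  set I := Set.Icc rmin rmax
  have hI : ∀ᵐ t ∂volume.restrict I, t ∈ I := ae_restrict_mem measurableSet_Icc
  obtain ⟨B, hB⟩ := (isCompact_Icc.prod hΘ).exists_bound_of_continuousOn hΦ
  have hΦLp : ∀ θ ∈ Θ, MemLp (Φ · θ) ∞ (volume.restrict I) := fun θ hθ =>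
    (hΦ.comp (by fun_prop : Continuous fun t => (t, θ)).continuousOn fun t ht => ⟨ht, hθ⟩)
      |>.memLp_top_restrict isCompact_Icc measurableSet_Icc
  have hw0 : 0 ≤ᵐ[volume.restrict I] w := hI.mono fun t ht => (hwpos t ht).le
  obtain ⟨m, hm, hmK⟩ := exists_pos_le_contrast_of_le_dist isCompact_Icc measurableSet_Icc hΘ
    hθ₀ hΦ hw hwpos hident hε
  obtain ⟨δ, hδ, hδm⟩ := exists_pos_forall_le_abs_of_le_mul_sq hm
    (mul_nonneg zero_le_four (integral_nonneg_of_ae hw0))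
  refine hSconv.tendsto_measure_of_ae_subset hδ fun n => ?_
  filter_upwards [hmin n] with ω hω hεω
  obtain ⟨C, hC⟩ := hφbdd n ω
  have hφLp : MemLp (φ n ω) ∞ (volume.restrict I) :=
    memLp_top_of_bound (hφmeas n).of_uncurry_left.aestronglyMeasurable C (hI.mono hC)
  have hdev : ∀ᵐ t ∂volume.restrict I, |φ n ω t - Φ t θ₀| ≤ S n ω := by
    rw [hSdef]
    refine ae_restrict_le_sSup_image measurableSet_Icc hAnull ⟨C + B, ?_⟩
    rintro _ ⟨t, ht, rfl⟩
    exact (abs_sub _ _).trans (add_le_add (hC t (hA ht)) (hB (t, θ₀) ⟨hA ht, hθ₀⟩))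
  have hθε : ε ≤ dist (θhat n ω) θ₀ := by rw [dist_eq_norm]; exact hεω.le
  exact hδm _ ((hmK _ (hθhatΘ n ω) hθε).trans (contrast_le_of_contrast_le hw hw0 hφLp
    (hΦLp _ (hθhatΘ n ω)) (hΦLp θ₀ hθ₀) (hω θ₀ hθ₀) hdev))

/-- Theorem A.1, convergence-in-probability conclusion: measurable minimizers `θ̂_n` of the
random contrast `θ ↦ ∫ w (φ_n(ω,·) - Φ(·,θ))²` converge to `θ₀` in probability, provided the
sup-deviations `S_n(ω) = sup_{t ∈ A} |φ_n(ω,t) - Φ(t,θ₀)|` tend to `0` in probability. -/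
theorem minimum_contrast_consistency_in_probability
    (p : ℕ) (hp : 1 ≤ p)
    (Θ : Set (EuclideanSpace ℝ (Fin p))) (hΘ : IsCompact Θ)
    (θ₀ : EuclideanSpace ℝ (Fin p)) (hθ₀ : θ₀ ∈ Θ)
    (rmin rmax : ℝ) (h0 : 0 ≤ rmin) (hlt : rmin < rmax)
    (w : ℝ → ℝ) (hw : IntegrableOn w (Set.Icc rmin rmax) volume)
    (hwpos : ∀ t ∈ Set.Icc rmin rmax, 0 < w t)
    (Φ : ℝ → EuclideanSpace ℝ (Fin p) → ℝ)
    (hΦ : ContinuousOn (fun q : ℝ × EuclideanSpace ℝ (Fin p) => Φ q.1 q.2)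
      (Set.Icc rmin rmax ×ˢ Θ))
    (hident : ∀ θ ∈ Θ, θ ≠ θ₀ →
      0 < volume {t ∈ Set.Icc rmin rmax | Φ t θ ≠ Φ t θ₀})
    {Ω : Type*} [MeasurableSpace Ω] (P : Measure Ω) [IsProbabilityMeasure P]
    (A : Set ℝ) (hA : A ⊆ Set.Icc rmin rmax)
    (hAnull : volume (Set.Icc rmin rmax \ A) = 0)
    (φ : ℕ → Ω → ℝ → ℝ)
    (hφmeas : ∀ n, Measurable (Function.uncurry (φ n)))
    (hφbdd : ∀ n, ∀ ω, ∃ C, ∀ t ∈ Set.Icc rmin rmax, |φ n ω t| ≤ C)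
    (S : ℕ → Ω → ℝ)
    (hSdef : ∀ n ω, S n ω = sSup ((fun t => |φ n ω t - Φ t θ₀|) '' A))
    (hSmeas : ∀ n, Measurable (S n))
    (hSconv : TendstoInMeasure P S atTop (fun _ => (0 : ℝ)))
    (θhat : ℕ → Ω → EuclideanSpace ℝ (Fin p))
    (hθhatmeas : ∀ n, Measurable (θhat n))
    (hθhatΘ : ∀ n ω, θhat n ω ∈ Θ)
    (hmin : ∀ n, ∀ᵐ ω ∂P, ∀ θ ∈ Θ,
      (∫ t in Set.Icc rmin rmax, w t * (φ n ω t - Φ t (θhat n ω)) ^ 2) ≤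
      (∫ t in Set.Icc rmin rmax, w t * (φ n ω t - Φ t θ) ^ 2)) :
    ∀ ε > 0, Tendsto (fun n => P {ω | ε < ‖θhat n ω - θ₀‖}) atTop (nhds 0) :=
  minimum_contrast_consistency_in_probability_general p Θ hΘ θ₀ hθ₀ rmin rmax w hw hwpos Φ hΦ hident
    P A hA hAnull φ hφmeas hφbdd S hSdef hSconv θhat hθhatΘ hmin
end

section
/- Let p ≥ 1, let Θ ⊆ ℝ^p be compact and θ₀ ∈ Θ. Let 0 ≤ r_min < r_max, let w : ℝ → ℝ be Lebesgue-integrable on [r_min, r_max] with w(t) > 0 for every t ∈ [r_min, r_max], and let Φ : [r_min, r_max] × Θ → ℝ be continuous, satisfying identifiability: for every θ ∈ Θ with θ ≠ θ₀, the set { t ∈ [r_min,r_max] : Φ(t,θ) ≠ Φ(t,θ₀) } has positive Lebesgue measure. Then for every ε > 0 there exists m > 0 such that for every θ ∈ Θ with ‖θ − θ₀‖ ≥ ε one has ∫_{r_min}^{r_max} w(t) ( Φ(t,θ) − Φ(t,θ₀) )² dt ≥ m. -/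
/-!
The contrast `F θ = ∫ w (Φ(·,θ) - Φ(·,θ₀))²` is continuous in `θ` by dominated convergence
(`Φ` is bounded on the compact `[r_min,r_max] × Θ`, so `C · |w|` dominates the integrand), and
strictly positive for `θ ≠ θ₀` because `w > 0` and the integrand vanishes only where
`Φ(·,θ) = Φ(·,θ₀)`. On the compact set `{θ ∈ Θ | ε ≤ ‖θ - θ₀‖}` a continuous positive function
attains a positive minimum.
-/

open MeasureTheory Filter

theorem setIntegral_mul_sq_pos {α : Type*} [MeasurableSpace α] {μ : Measure α} {S : Set α}
    {w f : α → ℝ} (hS : MeasurableSet S) (hwpos : ∀ t ∈ S, 0 < w t)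
    (hint : IntegrableOn (fun t => w t * f t ^ 2) S μ) (hne : 0 < μ {t ∈ S | f t ≠ 0}) :
    0 < ∫ t in S, w t * f t ^ 2 ∂μ := by
  rw [setIntegral_pos_iff_support_of_nonneg_ae
    (ae_restrict_of_forall_mem hS fun t ht => mul_nonneg (hwpos t ht).le (sq_nonneg _)) hint]
  refine hne.trans_le (measure_mono fun t ⟨ht, hft⟩ => ⟨?_, ht⟩)
  exact mul_ne_zero (hwpos t ht).ne' (pow_ne_zero 2 hft)

theorem continuousOn_setIntegral_mul_of_continuousOn_prod {α X : Type*} [TopologicalSpace α]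
    [T2Space α] [MeasurableSpace α] [OpensMeasurableSpace α] {μ : Measure α} [TopologicalSpace X]
    [FirstCountableTopology X] {S : Set α} {K : Set X} {w : α → ℝ} {f : α → X → ℝ}
    (hS : IsCompact S) (hK : IsCompact K) (hw : IntegrableOn w S μ) (hf : ContinuousOn (fun q : α × X => f q.1 q.2) (S ×ˢ K)) :
    ContinuousOn (fun x => ∫ t in S, w t * f t x ∂μ) K := by
  obtain ⟨C, hC⟩ := (hS.prod hK).exists_bound_of_continuousOn hf
  have hslice : ∀ x ∈ K, ContinuousOn (f · x) S := fun x hx =>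
    hf.comp (continuous_id.prodMk continuous_const).continuousOn fun t ht => ⟨ht, hx⟩
  refine continuousOn_of_dominated (bound := fun t => ‖w t‖ * C)
    (fun x hx => (hw.mul_continuousOn (hslice x hx) hS).aestronglyMeasurable)
    (fun x hx => ae_restrict_of_forall_mem hS.measurableSet fun t ht => ?_)
    (hw.norm.mul_const C) (ae_restrict_of_forall_mem hS.measurableSet fun t ht => ?_)
  · rw [norm_mul]
    exact mul_le_mul_of_nonneg_left (hC (t, x) ⟨ht, hx⟩) (norm_nonneg _)
  · exact continuousOn_const.mul
      (hf.comp (continuous_const.prodMk continuous_id).continuousOn fun x hx => ⟨ht, hx⟩)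

theorem limiting_contrast_separation_general
    (p : ℕ)
    (Θ : Set (EuclideanSpace ℝ (Fin p))) (hΘ : IsCompact Θ)
    (θ₀ : EuclideanSpace ℝ (Fin p)) (hθ₀ : θ₀ ∈ Θ)
    (rmin rmax : ℝ)
    (w : ℝ → ℝ) (hw : IntegrableOn w (Set.Icc rmin rmax) volume)
    (hwpos : ∀ t ∈ Set.Icc rmin rmax, 0 < w t)
    (Φ : ℝ → EuclideanSpace ℝ (Fin p) → ℝ)
    (hΦ : ContinuousOn (fun q : ℝ × EuclideanSpace ℝ (Fin p) => Φ q.1 q.2)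
      (Set.Icc rmin rmax ×ˢ Θ))
    (hident : ∀ θ ∈ Θ, θ ≠ θ₀ →
      0 < volume {t ∈ Set.Icc rmin rmax | Φ t θ ≠ Φ t θ₀}) :
    ∀ ε > 0, ∃ m > 0, ∀ θ ∈ Θ, ε ≤ ‖θ - θ₀‖ →
      m ≤ ∫ t in Set.Icc rmin rmax, w t * (Φ t θ - Φ t θ₀) ^ 2 := by
  intro ε hε
  have hslice : ∀ θ ∈ Θ, ContinuousOn (Φ · θ) (Set.Icc rmin rmax) := fun θ hθ =>
    hΦ.comp (continuous_id.prodMk continuous_const).continuousOn fun t ht => ⟨ht, hθ⟩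
  have hgap_cont : ContinuousOn
      (fun q : ℝ × EuclideanSpace ℝ (Fin p) => (Φ q.1 q.2 - Φ q.1 θ₀) ^ 2)
      (Set.Icc rmin rmax ×ˢ Θ) :=
    (hΦ.sub ((hslice θ₀ hθ₀).comp continuousOn_fst fun q hq => hq.1)).pow 2
  have hcontrast_pos : ∀ θ ∈ Θ, θ ≠ θ₀ →
      0 < ∫ t in Set.Icc rmin rmax, w t * (Φ t θ - Φ t θ₀) ^ 2 := fun θ hθ hne =>
    setIntegral_mul_sq_pos measurableSet_Icc hwpos
      (hw.mul_continuousOn (((hslice θ hθ).sub (hslice θ₀ hθ₀)).pow 2) isCompact_Icc)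
      (by simpa only [sub_ne_zero] using hident θ hθ hne)
  have hfar_compact : IsCompact (Θ ∩ {θ | ε ≤ ‖θ - θ₀‖}) :=
    hΘ.inter_right (isClosed_le continuous_const (by fun_prop))
  obtain ⟨m, hm, hmin⟩ := hfar_compact.exists_forall_le' (a := 0)
    ((continuousOn_setIntegral_mul_of_continuousOn_prod isCompact_Icc hΘ hw hgap_cont).mono
      Set.inter_subset_left)
    fun θ ⟨hθ, hεθ⟩ => hcontrast_pos θ hθ (by rintro rfl; simp at hεθ; linarith)
  exact ⟨m, hm, fun θ hθ hεθ => hmin θ ⟨hθ, hεθ⟩⟩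

/-- Separation property in the proof of Theorem A.1: under identifiability, continuity of `Φ`
on the compact `[r_min,r_max] × Θ` and positivity of `w`, the limiting contrast
`θ ↦ ∫ w (Φ(·,θ) - Φ(·,θ₀))²` is bounded away from `0` outside any neighbourhood of `θ₀`. -/
theorem limiting_contrast_separation
    (p : ℕ) (hp : 1 ≤ p)
    (Θ : Set (EuclideanSpace ℝ (Fin p))) (hΘ : IsCompact Θ)
    (θ₀ : EuclideanSpace ℝ (Fin p)) (hθ₀ : θ₀ ∈ Θ)
    (rmin rmax : ℝ) (h0 : 0 ≤ rmin) (hlt : rmin < rmax)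
    (w : ℝ → ℝ) (hw : IntegrableOn w (Set.Icc rmin rmax) volume)
    (hwpos : ∀ t ∈ Set.Icc rmin rmax, 0 < w t)
    (Φ : ℝ → EuclideanSpace ℝ (Fin p) → ℝ)
    (hΦ : ContinuousOn (fun q : ℝ × EuclideanSpace ℝ (Fin p) => Φ q.1 q.2)
      (Set.Icc rmin rmax ×ˢ Θ))
    (hident : ∀ θ ∈ Θ, θ ≠ θ₀ →
      0 < volume {t ∈ Set.Icc rmin rmax | Φ t θ ≠ Φ t θ₀}) :
    ∀ ε > 0, ∃ m > 0, ∀ θ ∈ Θ, ε ≤ ‖θ - θ₀‖ →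
      m ≤ ∫ t in Set.Icc rmin rmax, w t * (Φ t θ - Φ t θ₀) ^ 2 :=
  limiting_contrast_separation_general p Θ hΘ θ₀ hθ₀ rmin rmax w hw hwpos Φ hΦ hident
end
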